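/- Let θ₁ ≤ θ₂ ≤ ⋯ ≤ θ_L ≤ θ₁ + 1 and ω₁ ≤ ω₂ ≤ ⋯ ≤ ω_L ≤ ω₁ + 1 be real numbers such that the unordered L-tuples (e^{2πiθ₁},…,e^{2πiθ_L}) and (e^{2πiω₁},…,e^{2πiω_L}) are equal. Let r = Σ_{j=1}^L (θ_j − ω_j). Then r is an integer and θ_j = ω_{r+j} for all j = 1,…,L, where the sequence (ω_n) is extended to all integer indices n by ω_{pL+s} = ω_s + p for p ∈ ℤ and s ∈ {1,…,L}. -/

import Mathlib

/-!
Extend `θ` and `ω` to nondecreasing sequences `Θ, Ω : ℤ → ℝ` with `Θ (n + L) = Θ n + 1`.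
The first index at which `Θ` reaches a level `t` is `∑ j, ⌈t - θ j⌉`. Writing
`θ j = ω (σ j) + m j` with integers `m j`, this count for `θ` is the count for `ω` minus
`r = ∑ j, m j`; hence `t ≤ Θ n ↔ t ≤ Ω (n + r)` for every `t`, that is `Θ n = Ω (n + r)`.
-/

open Finset

section PeriodicExtension

variable {L : ℕ}

lemma toNat_emod_lt (hL : 0 < L) (n : ℤ) : (n % L).toNat < L := by
  have hL' : (0 : ℤ) < L := by exact_mod_cast hL
  have := Int.emod_lt_of_pos n hL'
  have := Int.emod_nonneg n hL'.ne'
  omega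

/-- `f (p * L + s) = f s + p`, with indices `s : Fin L` running over `0, …, L - 1` rather than
the paper's `1, …, L`. -/
def periodicExtension (hL : 0 < L) (f : Fin L → ℝ) (n : ℤ) : ℝ :=
  f ⟨(n % L).toNat, toNat_emod_lt hL n⟩ + (n / L : ℤ)

lemma periodicExtension_natCast (hL : 0 < L) (f : Fin L → ℝ) (j : Fin L) :
    periodicExtension hL f (j : ℕ) = f j := by
  have hj : ((j : ℕ) : ℤ) < L := by exact_mod_cast j.2
  simp [periodicExtension, Int.emod_eq_of_lt (by positivity) hj,
    Int.ediv_eq_zero_of_lt (by positivity) hj]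

lemma sum_ceil_sub_le_iff {f : Fin L → ℝ} (hm : Monotone f) (hspread : ∀ i j, f j ≤ f i + 1)
    (s : Fin L) (u : ℝ) : ∑ j, ⌈u - f j⌉ ≤ s ↔ u ≤ f s := by
  constructor
  · intro h
    by_contra! hlt
    have hcount : ∑ j, (if j ≤ s then (1 : ℤ) else 0) ≤ ∑ j, ⌈u - f j⌉ := by
      refine sum_le_sum fun j _ => ?_
      split_ifs with hj
      · exact Int.le_ceil_iff.2 (by push_cast; linarith [hm hj])
      · exact Int.le_ceil_iff.2 (by push_cast; linarith [hspread s j])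
    rw [sum_boole, filter_ge_eq_Iic, Fin.card_Iic] at hcount
    omega
  · intro h
    calc ∑ j, ⌈u - f j⌉ ≤ ∑ j, (if j < s then (1 : ℤ) else 0) := by
          refine sum_le_sum fun j _ => ?_
          split_ifs with hj
          · exact Int.ceil_le.2 (by push_cast; linarith [hspread j s])
          · exact Int.ceil_le.2 (by push_cast; linarith [hm (not_lt.1 hj)])
      _ = s := by rw [sum_boole, filter_gt_eq_Iio, Fin.card_Iio]

lemma le_periodicExtension_iff (hL : 0 < L) {f : Fin L → ℝ} (hm : Monotone f)
    (hspread : ∀ i j, f j ≤ f i + 1) (t : ℝ) (n : ℤ) :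
    t ≤ periodicExtension hL f n ↔ ∑ j, ⌈t - f j⌉ ≤ n := by
  set s : Fin L := ⟨(n % L).toNat, toNat_emod_lt hL n⟩
  have hn : n = s + L * (n / L) := by
    have := Int.emod_nonneg n (by exact_mod_cast hL.ne' : (L : ℤ) ≠ 0)
    simp only [s, Int.toNat_of_nonneg this, Int.emod_add_mul_ediv]
  have hshift : ∑ j, ⌈t - f j⌉ = ∑ j, ⌈(t - (n / L : ℤ)) - f j⌉ + L * (n / L) := by
    simp only [sub_right_comm t, Int.ceil_sub_intCast, sum_sub_distrib, sum_const, card_univ,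
      Fintype.card_fin, nsmul_eq_mul]
    ring
  have hcount : ∑ j, ⌈t - f j⌉ ≤ n ↔ ∑ j, ⌈(t - (n / L : ℤ)) - f j⌉ ≤ s := by
    rw [hshift]
    constructor <;> intro h <;> linarith
  rw [hcount, sum_ceil_sub_le_iff hm hspread s, periodicExtension]
  constructor <;> intro h <;> linarith

lemma le_add_one_of_le_first (hL : 0 < L) {f : Fin L → ℝ} (hm : Monotone f)
    (h : ∀ j, f j ≤ f ⟨0, hL⟩ + 1) (i j : Fin L) : f j ≤ f i + 1 :=
  (h j).trans (by gcongr; exact hm (Fin.mk_le_mk.2 (Nat.zero_le _)))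

lemma periodicExtension_eq_shift (hL : 0 < L) {f g : Fin L → ℝ}
    (hfm : Monotone f) (hfs : ∀ i j, f j ≤ f i + 1) (hgm : Monotone g) (hgs : ∀ i j, g j ≤ g i + 1)
    (σ : Equiv.Perm (Fin L)) (m : Fin L → ℤ) (hfg : ∀ j, f j = g (σ j) + m j) (n : ℤ) :
    periodicExtension hL f n = periodicExtension hL g (n + ∑ j, m j) := by
  have hcount (t : ℝ) : ∑ j, ⌈t - f j⌉ = ∑ j, ⌈t - g j⌉ - ∑ j, m j := by
    simp only [hfg, ← sub_sub, Int.ceil_sub_intCast, sum_sub_distrib,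
      Equiv.sum_comp σ (fun j => ⌈t - g j⌉)]
  refine eq_of_forall_le_iff fun t => ?_
  rw [le_periodicExtension_iff hL hfm hfs, le_periodicExtension_iff hL hgm hgs, hcount]
  omega

end PeriodicExtension

lemma exists_int_eq_add_of_exp_eq {x y : ℝ}
    (h : Complex.exp (2 * Real.pi * Complex.I * x) = Complex.exp (2 * Real.pi * Complex.I * y)) :
    ∃ m : ℤ, x = y + m := by
  obtain ⟨m, hm⟩ := Complex.exp_eq_exp_iff_exists_int.1 h
  refine ⟨m, ?_⟩
  have h2pi : 2 * (Real.pi : ℂ) * Complex.I ≠ 0 := by simp [Real.pi_ne_zero]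
  have hx : (x : ℂ) = y + m := mul_left_cancel₀ h2pi (by linear_combination hm)
  exact_mod_cast hx

/-- if two ordered lifts define the same unordered tuple on the
circle, then `r = ∑ (θ_j - ω_j)` is an integer and `θ_j = ω_{r+j}`, where `ω`
is extended to integer indices by `ω_{pL+s} = ω_s + p`. -/
theorem stmt_2 (L : ℕ) (hL : 0 < L) (θ ω : Fin L → ℝ)
    (hθm : Monotone θ) (hθ1 : ∀ j, θ j ≤ θ ⟨0, hL⟩ + 1)
    (hωm : Monotone ω) (hω1 : ∀ j, ω j ≤ ω ⟨0, hL⟩ + 1)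
    (hperm : ∃ σ : Equiv.Perm (Fin L), ∀ j,
      Complex.exp (2 * Real.pi * Complex.I * (θ j : ℂ)) =
        Complex.exp (2 * Real.pi * Complex.I * (ω (σ j) : ℂ))) :
    ∃ p : ℤ, (∑ j, (θ j - ω j)) = (p : ℝ) ∧
      ∀ j : Fin L, θ j =
        ω ⟨((p + (j : ℕ)) % (L : ℤ)).toNat, by
            have h0 : (0 : ℤ) < (L : ℤ) := by exact_mod_cast hL
            have h1 := Int.emod_lt_of_pos (p + (j : ℕ)) h0
            have h2 := Int.emod_nonneg (p + (j : ℕ)) (ne_of_gt h0)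
            omega⟩
          + (((p + (j : ℕ)) / (L : ℤ) : ℤ) : ℝ) := by
  obtain ⟨σ, hσ⟩ := hperm
  choose m hm using fun j => exists_int_eq_add_of_exp_eq (hσ j)
  refine ⟨∑ j, m j, ?_, fun j => ?_⟩
  · simp only [hm, add_sub_right_comm, sum_add_distrib, sum_sub_distrib, Equiv.sum_comp σ ω]
    push_cast
    ring
  · have hshift := periodicExtension_eq_shift hL hθm (le_add_one_of_le_first hL hθm hθ1)
      hωm (le_add_one_of_le_first hL hωm hω1) σ m hm (j : ℕ)
    rw [periodicExtension_natCast, add_comm] at hshift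
    exact hshift
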